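/- arXiv:2309.10432 — 4 statements merged into one kernel-verified Lean document; each statement's English description precedes it below -/
import Mathlib

section
/- Let ℓ be an odd prime, let V ⊆ Q_ℓ be an F_ℓ-linear subspace of dimension at most 2, and let c ∈ F_ℓ. Then the number of elements v ∈ V with disc(v) = c is at most 2ℓ. -/
/-!
In the coordinates `(x, y, z) = (m₀₀ - m₁₁, m₀₁, m₁₀)` on `Q_ℓ` the discriminant is the quadratic
form `x² + 4yz`. For odd `ℓ` two isotropic vectors that are orthogonal for it have vanishing cross
product, so a subspace on which `disc` vanishes identically is at most a line and has at most `ℓ`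
elements. Otherwise `disc w ≠ 0` for some `w ∈ V`; on each of the `#V / ℓ ≤ ℓ` lines
`v + F_ℓ w` in `V` the discriminant is a quadratic polynomial in the parameter with leading
coefficient `disc w`, so it takes the value `c` at most twice there.
-/

/-- The space `M₂(F_ℓ)` of 2×2 matrices over `F_ℓ`. -/
abbrev MatF (ℓ : ℕ) := Matrix (Fin 2) (Fin 2) (ZMod ℓ)

/-- The subspace `F_ℓ·1` of scalar matrices. -/
def scalarSub (ℓ : ℕ) : Submodule (ZMod ℓ) (MatF ℓ) :=
  Submodule.span (ZMod ℓ) {(1 : MatF ℓ)}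

/-- The quotient space `Q_ℓ = M₂(F_ℓ)/(F_ℓ·1)`. -/
abbrev QuotF (ℓ : ℕ) := MatF ℓ ⧸ scalarSub ℓ

namespace QuadraticMap

variable {K M : Type*} [Field K] [AddCommGroup M] [Module K M]

lemma eq_zero_or_eq_of_map_add_smul_eq (Q : QuadraticForm K M) {v w : M} (hw : Q w ≠ 0)
    {t : K} (h : Q (v + t • w) = Q v) : t = 0 ∨ t = -polar Q v w / Q w := by
  rw [QuadraticMap.map_add Q, QuadraticMap.map_smul, polar_smul_right, smul_eq_mul,
    smul_eq_mul] at h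
  have : t * (t * Q w + polar Q v w) = 0 := by linear_combination h
  refine (mul_eq_zero.mp this).imp id fun ht => ?_
  field_simp
  linear_combination ht

lemma natCard_fiber_mul_le [Finite M] (Q : QuadraticForm K M) {w : M} (hw : Q w ≠ 0) (c : K) :
    Nat.card {v // Q v = c} * Nat.card K ≤ 2 * Nat.card M := by
  classical
  have : Fintype M := Fintype.ofFinite M
  have hw0 : w ≠ 0 := fun h => hw (by rw [h, map_zero])
  set L := K ∙ w
  set S := Finset.univ.filter fun v => Q v = c
  have hfiber : ∀ b ∈ S.image L.mkQ, (S.filter fun u => L.mkQ u = b).card ≤ 2 := by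
    simp only [Finset.mem_image]
    rintro _ ⟨v, hv, rfl⟩
    refine le_trans (Finset.card_le_card (t := {v, v + (-polar Q v w / Q w) • w})
      fun u hu => ?_) Finset.card_le_two
    simp only [S, Finset.mem_filter, Finset.mem_univ, true_and, Submodule.mkQ_apply,
      Submodule.Quotient.eq] at hv hu
    obtain ⟨t, ht⟩ := Submodule.mem_span_singleton.mp hu.2
    obtain rfl : u = v + t • w := by rw [ht]; abel
    rcases eq_zero_or_eq_of_map_add_smul_eq Q hw (hu.1.trans hv.symm) with rfl | rfl <;> simp
  have hcard : Nat.card M = Nat.card K * Nat.card (M ⧸ L) := by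
    rw [L.card_eq_card_quotient_mul_card,
      Nat.card_congr (LinearEquiv.toSpanNonzeroSingleton K M w hw0).toEquiv]
  calc Nat.card {v // Q v = c} * Nat.card K = S.card * Nat.card K := by
        rw [Nat.card_eq_fintype_card, Fintype.card_subtype]
    _ ≤ 2 * (S.image L.mkQ).card * Nat.card K :=
        Nat.mul_le_mul_right _ (S.card_le_mul_card_image 2 hfiber)
    _ ≤ 2 * Nat.card (M ⧸ L) * Nat.card K := by
        gcongr
        rw [Nat.card_eq_fintype_card]
        exact Finset.card_le_univ _
    _ = 2 * Nat.card M := by rw [hcard]; ring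

end QuadraticMap

def discInCoords (K : Type*) [CommRing K] : QuadraticForm K (Fin 3 → K) :=
  QuadraticMap.proj 0 0 + 4 • QuadraticMap.proj 1 2

lemma discInCoords_apply {K : Type*} [CommRing K] (u : Fin 3 → K) :
    discInCoords K u = u 0 ^ 2 + 4 * (u 1 * u 2) := by
  simp [discInCoords, sq]

open scoped Matrix in
lemma crossProduct_eq_zero_of_discInCoords_eq_zero {K : Type*} [Field K] (h2 : (2 : K) ≠ 0)
    {u v : Fin 3 → K} (hu : discInCoords K u = 0) (hv : discInCoords K v = 0)
    (huv : discInCoords K (u + v) = 0) : u ⨯₃ v = 0 := by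
  simp only [discInCoords_apply, Pi.add_apply] at hu hv huv
  have h4 : (4 : K) ≠ 0 := by simpa [show (4 : K) = 2 * 2 by norm_num] using h2
  have hsq0 : (4 * (u 1 * v 2 - u 2 * v 1)) ^ 2 = 0 := by
    linear_combination (4 * (u 1 * v 2 + u 2 * v 1) - 2 * u 0 * v 0) *
      (huv - hu - hv) - 16 * v 1 * v 2 * hu + 4 * u 0 ^ 2 * hv
  have hsq1 : (u 2 * v 0 - u 0 * v 2) ^ 2 = 0 := by
    linear_combination v 2 ^ 2 * hu + u 2 ^ 2 * hv - u 2 * v 2 * (huv - hu - hv)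
  have hsq2 : (u 0 * v 1 - u 1 * v 0) ^ 2 = 0 := by
    linear_combination v 1 ^ 2 * hu + u 1 ^ 2 * hv - u 1 * v 1 * (huv - hu - hv)
  ext i
  fin_cases i <;> simp [cross_apply]
  · simpa [h4] using hsq0
  · simpa using hsq1
  · simpa using hsq2

def quotCoords (ℓ : ℕ) : QuotF ℓ →ₗ[ZMod ℓ] Fin 3 → ZMod ℓ :=
  (scalarSub ℓ).liftQ
    { toFun := fun m => ![m 0 0 - m 1 1, m 0 1, m 1 0]
      map_add' := fun m n => by ext i; fin_cases i <;> simp [add_sub_add_comm]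
      map_smul' := fun a m => by ext i; fin_cases i <;> simp [mul_sub] }
    (by
      rw [scalarSub, Submodule.span_le, Set.singleton_subset_iff]
      ext i; fin_cases i <;> simp)

lemma quotCoords_mk {ℓ : ℕ} (m : MatF ℓ) :
    quotCoords ℓ (Submodule.Quotient.mk m) = ![m 0 0 - m 1 1, m 0 1, m 1 0] := rfl

lemma ker_quotCoords (ℓ : ℕ) : LinearMap.ker (quotCoords ℓ) = ⊥ := by
  refine Submodule.ker_liftQ_eq_bot _ _ _ fun m hm => ?_
  have h : ![m 0 0 - m 1 1, m 0 1, m 1 0] = 0 := hm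
  simp only [Matrix.cons_eq_zero_iff, sub_eq_zero] at h
  refine Submodule.mem_span_singleton.mpr ⟨m 0 0, ?_⟩
  ext i j
  fin_cases i <;> fin_cases j <;> simp [h]

def discForm (ℓ : ℕ) : QuadraticForm (ZMod ℓ) (QuotF ℓ) :=
  (discInCoords (ZMod ℓ)).comp (quotCoords ℓ)

lemma discForm_mk {ℓ : ℕ} (m : MatF ℓ) :
    discForm ℓ (Submodule.Quotient.mk m) = m.trace ^ 2 - 4 * m.det := by
  simp only [discForm, QuadraticMap.comp_apply, quotCoords_mk, discInCoords_apply,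
    Matrix.trace_fin_two, Matrix.det_fin_two, Matrix.cons_val_zero, Matrix.cons_val_one,
    Matrix.cons_val]
  ring

lemma finrank_le_one_of_discForm_eq_zero {ℓ : ℕ} [Fact ℓ.Prime] (h2 : (2 : ZMod ℓ) ≠ 0)
    (V : Submodule (ZMod ℓ) (QuotF ℓ)) (hV : ∀ v ∈ V, discForm ℓ v = 0) :
    Module.finrank (ZMod ℓ) V ≤ 1 := by
  by_contra! h
  have : Nontrivial V := Module.nontrivial_of_finrank_pos (R := ZMod ℓ) (by omega)
  obtain ⟨x, hx⟩ := exists_ne (0 : V)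
  obtain ⟨y, hxy⟩ := exists_linearIndependent_pair_of_one_lt_finrank h hx
  have hcomp : (quotCoords ℓ).comp V.subtype ∘ ![x, y] = ![quotCoords ℓ x, quotCoords ℓ y] := by
    ext i; fin_cases i <;> rfl
  have hind := hxy.map' ((quotCoords ℓ).comp V.subtype)
    (by rw [LinearMap.ker_comp, ker_quotCoords, Submodule.comap_bot, Submodule.ker_subtype])
  rw [hcomp, ← crossProduct_ne_zero_iff_linearIndependent] at hind
  refine hind (crossProduct_eq_zero_of_discInCoords_eq_zero h2 (hV x x.2) (hV y y.2) ?_)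
  rw [← map_add]
  exact hV _ (x + y).2

/-- Let `ℓ` be an odd prime, `d : Q_ℓ → F_ℓ` the map induced by
the discriminant `disc(α) = (Tr α)² − 4 det α`, `V ⊆ Q_ℓ` a subspace of dimension
at most `2`, and `c ∈ F_ℓ`.  Then the number of `v ∈ V` with `d v = c` is at
most `2ℓ`. -/
theorem stmt_3 (ℓ : ℕ) (hℓ : Nat.Prime ℓ) (hodd : Odd ℓ)
    (d : QuotF ℓ → ZMod ℓ)
    (hd : ∀ m : MatF ℓ,
      d (Submodule.Quotient.mk m) = (Matrix.trace m) ^ 2 - 4 * m.det)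
    (V : Submodule (ZMod ℓ) (QuotF ℓ))
    (hdim : Module.finrank (ZMod ℓ) ↥V ≤ 2)
    (c : ZMod ℓ) :
    Nat.card {v : QuotF ℓ | v ∈ V ∧ d v = c} ≤ 2 * ℓ := by
  have : Fact ℓ.Prime := ⟨hℓ⟩
  obtain rfl : d = discForm ℓ := funext fun v => Submodule.Quotient.induction_on _ v fun m => by
    rw [hd, discForm_mk]
  have hcardV : Nat.card V = ℓ ^ Module.finrank (ZMod ℓ) V := by
    rw [Module.natCard_eq_pow_finrank (K := ZMod ℓ), Nat.card_zmod]
  by_cases hiso : ∀ v ∈ V, discForm ℓ v = 0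
  · have h2 : (2 : ZMod ℓ) ≠ 0 := Ring.two_ne_zero (by
      rw [ZMod.ringChar_zmod_n]; rintro rfl; exact Nat.not_even_iff_odd.mpr hodd even_two)
    calc Nat.card {v : QuotF ℓ | v ∈ V ∧ discForm ℓ v = c}
        ≤ Nat.card V := Nat.card_mono (Set.toFinite _) fun v hv => hv.1
      _ ≤ ℓ ^ 1 := hcardV ▸ Nat.pow_le_pow_right hℓ.pos
          (finrank_le_one_of_discForm_eq_zero h2 V hiso)
      _ ≤ 2 * ℓ := by rw [pow_one]; omega
  · push Not at hiso
    obtain ⟨w, hwV, hw⟩ := hiso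
    have hfiber := QuadraticMap.natCard_fiber_mul_le ((discForm ℓ).comp V.subtype)
      (w := ⟨w, hwV⟩) hw c
    have hrestrict : Nat.card {v : V // (discForm ℓ).comp V.subtype v = c} =
        Nat.card {v : QuotF ℓ | v ∈ V ∧ discForm ℓ v = c} :=
      Nat.card_congr (Equiv.subtypeSubtypeEquivSubtypeInter (· ∈ V) (discForm ℓ · = c))
    rw [hrestrict, Nat.card_zmod] at hfiber
    have : Nat.card V ≤ ℓ ^ 2 := hcardV ▸ Nat.pow_le_pow_right hℓ.pos hdim
    exact Nat.le_of_mul_le_mul_right (by nlinarith) hℓ.pos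
end

section
/- Let ℓ > 2 be a prime number. Let α₁, α₂, α₃ be independent random elements of Q_ℓ, each supported on nonzero elements and each having an SL₂(F_ℓ)-invariant distribution (under conjugation). Then (α₁, α₂, α₃) is an F_ℓ-basis of Q_ℓ (equivalently, the three elements are F_ℓ-linearly independent) with probability at least 1/8. -/
/-!
Let `ν` be a conjugation-invariant distribution on `Q_ℓ` with `ν 0 = 0`. For `ℓ > 2` the
representation of `SL₂(F_ℓ)` on `Q_ℓ ≅ 𝔰𝔩₂` is irreducible, so every proper nonzero subspace `W`
is moved by some `g`, and `W ⊓ gW` is a proper subspace of `W`. Since `W` and `gW` have the same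
mass and their union has mass at most `1`, `2 ν(W) ≤ 1 + ν(W ⊓ gW)`; induction on the dimension
gives `ν(W) ≤ 1 - 2⁻ᵈ` whenever `dim W ≤ d < 3`. Hence `α₁ ≠ 0`, `α₂ ∉ ⟨α₁⟩`, `α₃ ∉ ⟨α₁, α₂⟩`
hold with conditional probabilities at least `1`, `½`, `¼`.

Irreducibility: conjugation by the elementary unipotents acts on `Q_ℓ` as `1 + N` with `N`
nilpotent. Iterating the upper `N` on a nonzero vector yields a nonzero multiple of
`e = [[0, 1], [0, 0]]`, and iterating the lower one on `e` yields `f` and `h`; with `2` invertible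
these span `Q_ℓ`.
-/

section InvariantDistrib

open Finset Module Submodule

theorem two_mul_sum_le_one_add_sum_inter_image {α : Type*} [Fintype α] [DecidableEq α]
    {ν : α → ℝ} (hν0 : ∀ x, 0 ≤ ν x) (hν1 : ∑ x, ν x = 1) {f : α → α}
    (hf : Function.Injective f) (hνf : ∀ x, ν (f x) = ν x) (s : Finset α) :
    2 * ∑ x ∈ s, ν x ≤ 1 + ∑ x ∈ s ∩ s.image f, ν x := by
  have himage : ∑ x ∈ s.image f, ν x = ∑ x ∈ s, ν x := by
    rw [sum_image hf.injOn]
    exact sum_congr rfl fun x _ => hνf x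
  have hunion : ∑ x ∈ s ∪ s.image f, ν x ≤ 1 :=
    hν1 ▸ sum_le_univ_sum_of_nonneg hν0
  have := sum_union_inter (s₁ := s) (s₂ := s.image f) (f := ν)
  linarith

section LinearIndependent

variable {K V : Type*} [Field K] [AddCommGroup V] [Module K V]

theorem linearIndependent_vecCons_three_iff {x₁ x₂ x₃ : V} :
    LinearIndependent K ![x₁, x₂, x₃] ↔ x₁ ∉ span K (Set.range ![]) ∧
      x₂ ∉ span K (Set.range ![x₁]) ∧ x₃ ∉ span K (Set.range ![x₁, x₂]) := by
  have h3 : ![x₁, x₂, x₃] = Fin.snoc ![x₁, x₂] x₃ := by ext i; fin_cases i <;> rfl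
  have h2 : ![x₁, x₂] = Fin.snoc ![x₁] x₂ := by ext i; fin_cases i <;> rfl
  have h1 : ![x₁] = Fin.snoc ![] x₁ := by ext i; fin_cases i; rfl
  rw [h3, linearIndependent_finSnoc]
  nth_rw 1 [h2]
  rw [linearIndependent_finSnoc]
  nth_rw 1 [h1]
  rw [linearIndependent_finSnoc, and_iff_right linearIndependent_empty_type, and_assoc]

end LinearIndependent

namespace Representation

variable {K G V : Type*} [Field K] [Group G] [AddCommGroup V] [Module K V]
  {ρ : Representation K G V}

theorem exists_map_ne_of_isIrreducible [ρ.IsIrreducible] {W : Submodule K V} (hbot : W ≠ ⊥)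
    (htop : W ≠ ⊤) : ∃ g, W.map (ρ g) ≠ W := by
  by_contra! h
  rcases IsSimpleOrder.eq_bot_or_eq_top
    (⟨W, fun g x hx => h g ▸ mem_map_of_mem hx⟩ : Subrepresentation ρ) with hW | hW
  · exact hbot (congrArg Subrepresentation.toSubmodule hW)
  · exact htop (congrArg Subrepresentation.toSubmodule hW)

variable [Fintype V]

structure IsInvariantDistrib (ρ : Representation K G V) (ν : V → ℝ) : Prop where
  nonneg : ∀ x, 0 ≤ ν x
  sum_eq_one : ∑ x, ν x = 1
  apply_zero : ν 0 = 0
  apply_rep : ∀ g x, ν (ρ g x) = ν x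

namespace IsInvariantDistrib

open scoped Classical

variable {ν : V → ℝ}

theorem two_mul_sum_mem_le (hν : IsInvariantDistrib ρ ν) (g : G) (W : Submodule K V) :
    2 * ∑ x with x ∈ W, ν x ≤ 1 + ∑ x with x ∈ W ⊓ W.map (ρ g), ν x := by
  have himage :
      ({x | x ∈ W} : Finset V).image (ρ g) = ({x | x ∈ W.map (ρ g)} : Finset V) := by
    ext; simp
  have := two_mul_sum_le_one_add_sum_inter_image hν.nonneg hν.sum_eq_one
    (ρ.apply_bijective g).injective (hν.apply_rep g) {x | x ∈ W}
  rw [himage, ← filter_and] at this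
  simpa only [Submodule.mem_inf] using this

theorem sum_mem_bot (hν : IsInvariantDistrib ρ ν) :
    ∑ x with x ∈ (⊥ : Submodule K V), ν x = 0 := by
  simp [sum_filter, hν.apply_zero]

theorem sum_mem_le [ρ.IsIrreducible] (hν : IsInvariantDistrib ρ ν) :
    ∀ (d : ℕ) (W : Submodule K V), finrank K W ≤ d → d < finrank K V →
      ∑ x with x ∈ W, ν x ≤ 1 - (1 / 2) ^ d
  | 0, W, hW, _ => by
    rw [Nat.le_zero, Submodule.finrank_eq_zero] at hW
    rw [hW, hν.sum_mem_bot]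
    norm_num
  | d + 1, W, hW, hd => by
    by_cases hbot : W = ⊥
    · rw [hbot, hν.sum_mem_bot, sub_nonneg]
      exact pow_le_one₀ (by norm_num) (by norm_num)
    have htop : W ≠ ⊤ := by
      rintro rfl; rw [finrank_top] at hW; omega
    obtain ⟨g, hg⟩ := exists_map_ne_of_isIrreducible (ρ := ρ) hbot htop
    have hlt : W ⊓ W.map (ρ g) < W := inf_le_left.lt_of_ne fun h =>
      hg (Submodule.eq_of_le_of_finrank_le (h.ge.trans inf_le_right) (finrank_map_le _ _)).symm
    have := sum_mem_le hν d (W ⊓ W.map (ρ g))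
      (Nat.lt_succ_iff.mp ((finrank_lt_finrank_of_lt hlt).trans_le hW)) (by omega)
    have := hν.two_mul_sum_mem_le g W
    rw [pow_succ]
    linarith

theorem le_sum_notMem_span [ρ.IsIrreducible] (hν : IsInvariantDistrib ρ ν) {n : ℕ}
    (v : Fin n → V) (hn : n < finrank K V) :
    (1 / 2) ^ n ≤ ∑ x with x ∉ span K (Set.range v), ν x := by
  have := hν.sum_mem_le n _ ((finrank_range_le_card v).trans (Fintype.card_fin n).le) hn
  have := sum_filter_add_sum_filter_not univ (· ∈ span K (Set.range v)) ν
  rw [hν.sum_eq_one] at this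
  linarith

end IsInvariantDistrib

open scoped Classical in
theorem one_div_eight_le_sum_linearIndependent [ρ.IsIrreducible] (hV : 2 < finrank K V)
    {ν : Fin 3 → V → ℝ} (hν : ∀ i, IsInvariantDistrib ρ (ν i)) :
    1 / 8 ≤ ∑ x₁, ∑ x₂, ∑ x₃,
      if LinearIndependent K ![x₁, x₂, x₃] then ν 0 x₁ * ν 1 x₂ * ν 2 x₃ else 0 := by
  have hsum : (∑ x₁, ∑ x₂, ∑ x₃,
      if LinearIndependent K ![x₁, x₂, x₃] then ν 0 x₁ * ν 1 x₂ * ν 2 x₃ else 0) =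
      ∑ x₁ with x₁ ∉ span K (Set.range ![]), ν 0 x₁ *
        ∑ x₂ with x₂ ∉ span K (Set.range ![x₁]), ν 1 x₂ *
          ∑ x₃ with x₃ ∉ span K (Set.range ![x₁, x₂]), ν 2 x₃ := by
    simp only [linearIndependent_vecCons_three_iff, sum_filter, mul_sum, ite_and, mul_ite,
      mul_zero, sum_ite_irrel, sum_const_zero, mul_assoc]
  rw [hsum]
  calc (1 : ℝ) / 8 = (1 / 2) ^ 0 * ((1 / 2) ^ 1 * (1 / 2) ^ 2) := by norm_num
    _ ≤ ∑ x₁ with x₁ ∉ span K (Set.range ![]), ν 0 x₁ * ((1 / 2) ^ 1 * (1 / 2) ^ 2) := by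
      rw [← sum_mul]
      gcongr
      exact (hν 0).le_sum_notMem_span ![] (by omega)
    _ ≤ ∑ x₁ with x₁ ∉ span K (Set.range ![]), ν 0 x₁ *
          ∑ x₂ with x₂ ∉ span K (Set.range ![x₁]), ν 1 x₂ * (1 / 2) ^ 2 := by
      gcongr with x₁
      · exact (hν 0).nonneg x₁
      · rw [← sum_mul]
        gcongr
        exact (hν 1).le_sum_notMem_span ![x₁] (by omega)
    _ ≤ _ := by
      gcongr with x₁ _ x₂
      · exact (hν 0).nonneg x₁
      · exact (hν 1).nonneg x₂
      · exact (hν 2).le_sum_notMem_span ![x₁, x₂] hV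

end Representation

end InvariantDistrib

namespace Matrix.SpecialLinearGroup

variable {n R : Type*} [Fintype n] [DecidableEq n] [CommRing R]

def conjRep : Representation R (SpecialLinearGroup n R) (Matrix n n R) where
  toFun g := LinearMap.mulLeftRight R (↑g, ↑g⁻¹)
  map_one' := by ext; simp
  map_mul' g h := by ext; simp [Matrix.mul_assoc]

theorem conjRep_apply (g : SpecialLinearGroup n R) (M : Matrix n n R) :
    conjRep g M = (g : Matrix n n R) * M * ((g⁻¹ : SpecialLinearGroup n R) : Matrix n n R) :=
  rfl

end Matrix.SpecialLinearGroup

namespace QuotF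

open Matrix Matrix.SpecialLinearGroup Submodule.Quotient
open scoped MatrixGroups

variable (ℓ : ℕ)

theorem scalarSub_le_comap_conjRep (g : SL(2, ZMod ℓ)) :
    scalarSub ℓ ≤ (scalarSub ℓ).comap (Matrix.SpecialLinearGroup.conjRep g) := by
  rw [scalarSub, Submodule.span_le, Set.singleton_subset_iff, SetLike.mem_coe,
    Submodule.mem_comap, conjRep_apply, Matrix.mul_one, ← coe_mul, mul_inv_cancel, coe_one]
  exact Submodule.mem_span_singleton_self _

def conjRep : Representation (ZMod ℓ) (SL(2, ZMod ℓ)) (QuotF ℓ) :=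
  (Matrix.SpecialLinearGroup.conjRep (n := Fin 2) (R := ZMod ℓ)).quotient (scalarSub ℓ)
    (scalarSub_le_comap_conjRep ℓ)

def upperUnipotent : SL(2, ZMod ℓ) :=
  ⟨!![1, 1; 0, 1], by simp [det_fin_two_of]⟩

def lowerUnipotent : SL(2, ZMod ℓ) :=
  ⟨!![1, 0; 1, 1], by simp [det_fin_two_of]⟩

variable {ℓ}

theorem conjRep_mk (g : SL(2, ZMod ℓ)) (M : MatF ℓ) :
    conjRep ℓ g (mk M) = mk ((g : MatF ℓ) * M * ((g⁻¹ : SL(2, ZMod ℓ)) : MatF ℓ)) :=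
  rfl

theorem coe_upperUnipotent_inv :
    ↑(upperUnipotent ℓ)⁻¹ = (!![1, -1; 0, 1] : MatF ℓ) := by
  rw [SL2_inv_expl]; ext i j; fin_cases i <;> fin_cases j <;> simp [upperUnipotent]

theorem coe_lowerUnipotent_inv :
    ↑(lowerUnipotent ℓ)⁻¹ = (!![1, 0; -1, 1] : MatF ℓ) := by
  rw [SL2_inv_expl]; ext i j; fin_cases i <;> fin_cases j <;> simp [lowerUnipotent]

theorem conjRep_upperUnipotent_mk_sub (M : MatF ℓ) :
    conjRep ℓ (upperUnipotent ℓ) (mk M) - mk M =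
      mk !![M 1 0, M 1 1 - M 0 0 - M 1 0; 0, -M 1 0] := by
  rw [conjRep_mk, ← mk_sub, coe_upperUnipotent_inv, eta_fin_two M]
  simp only [upperUnipotent, coe_mk, mul_fin_two]
  congr 1
  ext i j
  fin_cases i <;> fin_cases j <;> simp
  ring

theorem conjRep_lowerUnipotent_mk_sub (M : MatF ℓ) :
    conjRep ℓ (lowerUnipotent ℓ) (mk M) - mk M =
      mk !![-M 0 1, 0; M 0 0 - M 0 1 - M 1 1, M 0 1] := by
  rw [conjRep_mk, ← mk_sub, coe_lowerUnipotent_inv, eta_fin_two M]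
  simp only [lowerUnipotent, coe_mk, mul_fin_two]
  congr 1
  ext i j
  fin_cases i <;> fin_cases j <;> simp
  ring

section Subrepresentation

variable {σ : Subrepresentation (conjRep ℓ)}

theorem mk_mem_of_upperUnipotent {M : MatF ℓ} (hM : mk M ∈ σ.toSubmodule) :
    mk !![M 1 0, M 1 1 - M 0 0 - M 1 0; 0, -M 1 0] ∈ σ.toSubmodule := by
  rw [← conjRep_upperUnipotent_mk_sub]
  exact sub_mem (σ.apply_mem_toSubmodule _ hM) hM

theorem mk_mem_of_lowerUnipotent {M : MatF ℓ} (hM : mk M ∈ σ.toSubmodule) :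
    mk !![-M 0 1, 0; M 0 0 - M 0 1 - M 1 1, M 0 1] ∈ σ.toSubmodule := by
  rw [← conjRep_lowerUnipotent_mk_sub]
  exact sub_mem (σ.apply_mem_toSubmodule _ hM) hM

variable [Fact ℓ.Prime]

theorem mk_mem_of_eq_smul {M N : MatF ℓ} {s : ZMod ℓ} (hs : s ≠ 0)
    (hM : mk M ∈ σ.toSubmodule) (h : M = s • N) : mk N ∈ σ.toSubmodule := by
  rwa [h, mk_smul, Submodule.smul_mem_iff _ hs] at hM

theorem mk_upperNilpotent_mem (h2 : (2 : ZMod ℓ) ≠ 0) (hbot : σ.toSubmodule ≠ ⊥) :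
    mk !![0, 1; 0, 0] ∈ σ.toSubmodule := by
  obtain ⟨x, hM, hx0⟩ := σ.toSubmodule.exists_mem_ne_zero_of_ne_bot hbot
  obtain ⟨M, rfl⟩ := mk_surjective _ x
  by_cases hc : M 1 0 = 0
  · by_cases hd : M 0 0 = M 1 1
    · have hM' : (mk M : QuotF ℓ) = mk (M 0 1 • !![0, 1; 0, 0]) := by
        rw [Submodule.Quotient.eq, scalarSub, Submodule.mem_span_singleton]
        exact ⟨M 0 0, by ext i j; fin_cases i <;> fin_cases j <;> simp [hc, hd]⟩
      refine mk_mem_of_eq_smul (fun h => hx0 ?_) (hM' ▸ hM) rfl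
      rw [hM', h, zero_smul, mk_zero]
    · refine mk_mem_of_eq_smul (sub_ne_zero.mpr (Ne.symm hd))
        (mk_mem_of_upperUnipotent hM) ?_
      ext i j; fin_cases i <;> fin_cases j <;> simp [hc]
  · refine mk_mem_of_eq_smul (mul_ne_zero (neg_ne_zero.mpr h2) hc)
      (mk_mem_of_upperUnipotent (mk_mem_of_upperUnipotent hM)) ?_
    ext i j; fin_cases i <;> fin_cases j <;> simp
    ring

theorem toSubmodule_eq_top_of_mk_upperNilpotent_mem (h2 : (2 : ZMod ℓ) ≠ 0)
    (hE : mk !![0, 1; 0, 0] ∈ σ.toSubmodule) : σ.toSubmodule = ⊤ := by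
  have hL := mk_mem_of_lowerUnipotent hE
  have hF : mk !![(0 : ZMod ℓ), 0; 1, 0] ∈ σ.toSubmodule := by
    refine mk_mem_of_eq_smul (neg_ne_zero.mpr h2) (mk_mem_of_lowerUnipotent hL) ?_
    ext i j; fin_cases i <;> fin_cases j <;> simp
    ring
  have hH : mk !![(-1 : ZMod ℓ), 0; 0, 1] ∈ σ.toSubmodule := by
    refine mk_mem_of_eq_smul one_ne_zero (add_mem hL hF) ?_
    ext i j; fin_cases i <;> fin_cases j <;> simp
  rw [eq_top_iff]
  rintro x -
  obtain ⟨M, rfl⟩ := mk_surjective _ x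
  have hM : (mk M : QuotF ℓ) = ((M 1 1 - M 0 0) / 2) • mk !![-1, 0; 0, 1] +
      M 0 1 • mk !![0, 1; 0, 0] + M 1 0 • mk !![0, 0; 1, 0] := by
    rw [← mk_smul, ← mk_smul, ← mk_smul, ← mk_add, ← mk_add, Submodule.Quotient.eq, scalarSub,
      Submodule.mem_span_singleton]
    refine ⟨(M 0 0 + M 1 1) / 2, ?_⟩
    ext i j; fin_cases i <;> fin_cases j <;> simp <;> field_simp <;> ring
  rw [hM]
  exact add_mem (add_mem (Submodule.smul_mem _ _ hH) (Submodule.smul_mem _ _ hE))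
    (Submodule.smul_mem _ _ hF)

end Subrepresentation

variable [Fact ℓ.Prime]

theorem finrank_eq_three : Module.finrank (ZMod ℓ) (QuotF ℓ) = 3 := by
  have h := (scalarSub ℓ).finrank_quotient_add_finrank
  have h1 : Module.finrank (ZMod ℓ) (scalarSub ℓ) = 1 := finrank_span_singleton one_ne_zero
  rw [h1, Module.finrank_matrix, Fintype.card_fin, Module.finrank_self] at h
  exact Nat.add_right_cancel (m := 1) h

theorem conjRep_isIrreducible (h2 : (2 : ZMod ℓ) ≠ 0) : (conjRep ℓ).IsIrreducible where
  exists_pair_ne := by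
    have : Nontrivial (QuotF ℓ) := Module.nontrivial_of_finrank_eq_succ finrank_eq_three
    exact ⟨⊥, ⊤, fun h => bot_ne_top (congrArg Subrepresentation.toSubmodule h)⟩
  eq_bot_or_eq_top σ := (eq_or_ne σ.toSubmodule ⊥).imp Subrepresentation.ext fun hbot =>
    Subrepresentation.ext
      (toSubmodule_eq_top_of_mk_upperNilpotent_mem h2 (mk_upperNilpotent_mem h2 hbot))

end QuotF

open scoped Classical in
/-- Let `ℓ > 2` be a prime and let `α₁, α₂, α₃` be independent
random elements of `Q_ℓ`, each supported on nonzero elements and each having an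
`SL₂(F_ℓ)`-invariant distribution under conjugation (the map `cg` below is the
map of `Q_ℓ` induced by `x ↦ g⁻¹ x g`).  Then `(α₁, α₂, α₃)` is an `F_ℓ`-basis
of `Q_ℓ` (equivalently, linearly independent) with probability at least `1/8`. -/
theorem stmt_4 (ℓ : ℕ) (hℓ : Nat.Prime ℓ) (hℓ2 : 2 < ℓ)
    (ν : Fin 3 → QuotF ℓ → ℝ)
    (hpos : ∀ i x, 0 ≤ ν i x)
    (hsum : ∀ i, ∑' x, ν i x = 1)
    (hzero : ∀ i, ν i 0 = 0)
    (hinv : ∀ (i : Fin 3) (g : Matrix.SpecialLinearGroup (Fin 2) (ZMod ℓ))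
      (cg : QuotF ℓ → QuotF ℓ),
      (∀ m : MatF ℓ, cg (Submodule.Quotient.mk m) =
        Submodule.Quotient.mk
          (((g⁻¹ : Matrix.SpecialLinearGroup (Fin 2) (ZMod ℓ)) : MatF ℓ) * m * (g : MatF ℓ))) →
      ∀ x, ν i (cg x) = ν i x) :
    (1 : ℝ) / 8 ≤ ∑' x₁, ∑' x₂, ∑' x₃,
      (if LinearIndependent (ZMod ℓ) ![x₁, x₂, x₃] then ν 0 x₁ * ν 1 x₂ * ν 2 x₃ else 0) := by
  have := Fact.mk hℓ
  have h2 : (2 : ZMod ℓ) ≠ 0 := by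
    exact_mod_cast (ZMod.natCast_eq_zero_iff 2 ℓ).not.mpr (Nat.not_dvd_of_pos_of_lt two_pos hℓ2)
  have := QuotF.conjRep_isIrreducible h2
  let := Fintype.ofFinite (QuotF ℓ)
  have hν : ∀ i, (QuotF.conjRep ℓ).IsInvariantDistrib (ν i) := fun i =>
    { nonneg := hpos i
      sum_eq_one := (tsum_fintype _).symm.trans (hsum i)
      apply_zero := hzero i
      -- `hinv` is about `x ↦ g⁻¹ x g`, the representation is `x ↦ g x g⁻¹`
      apply_rep := fun g => hinv i g⁻¹ _ fun m => by rw [QuotF.conjRep_mk, inv_inv] }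
  simpa only [tsum_fintype] using Representation.one_div_eight_le_sum_linearIndependent
    (by rw [QuotF.finrank_eq_three]; norm_num) hν
end

section
/- Let ℓ > 2 be a prime number and let ε ≥ 0. Let α₁, α₂, α₃ be independent random elements of Q_ℓ, each supported on nonzero elements and each having a distribution that is ε-close to SL₂(F_ℓ)-invariant (under conjugation). Then (α₁, α₂, α₃) is an F_ℓ-basis of Q_ℓ with probability at least 1/8 − 3ε. -/
open Module Submodule Set Matrix
open scoped MatrixGroups

section Mass

variable {α : Type*} [Fintype α]

noncomputable def mass (ν : α → ℝ) (s : Set α) : ℝ := ∑ x, s.indicator ν x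

variable {ν : α → ℝ}

lemma mass_singleton (ν : α → ℝ) (a : α) : mass ν {a} = ν a := by
  rw [mass, Fintype.sum_eq_single a fun x (hx : x ≠ a) => indicator_of_notMem (s := {a}) hx ν]
  exact indicator_of_mem rfl ν

lemma mass_compl (hsum : ∑ x, ν x = 1) (s : Set α) : mass ν sᶜ = 1 - mass ν s := by
  simp [mass, indicator_compl, Finset.sum_sub_distrib, hsum]

lemma mass_add_mass_le (hν : 0 ≤ ν) (hsum : ∑ x, ν x = 1) (s t : Set α) :
    mass ν s + mass ν t ≤ 1 + mass ν (s ∩ t) := by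
  rw [mass, mass, mass, ← Finset.sum_add_distrib, ← hsum, ← Finset.sum_add_distrib]
  refine Finset.sum_le_sum fun x _ => ?_
  rw [← indicator_union_add_inter_apply]
  exact add_le_add_left (indicator_le_self' (fun x _ => hν x) x) _

lemma mass_le_mass_image_add (ν : α → ℝ) (σ : α ≃ α) (s : Set α) :
    mass ν s ≤ mass ν (σ '' s) + ∑ x, |ν (σ x) - ν x| := by
  have himage : mass ν (σ '' s) = ∑ x, s.indicator (ν ∘ σ) x := by
    rw [mass, ← σ.sum_comp]
    simp [indicator_image σ.injective]
  rw [himage, mass, ← Finset.sum_add_distrib]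
  refine Finset.sum_le_sum fun x _ => ?_
  by_cases hx : x ∈ s
  · simp only [indicator_of_mem hx, Function.comp_apply]
    linarith [neg_abs_le (ν (σ x) - ν x)]
  · simp [indicator_of_notMem hx]

lemma two_mul_mass_le (hν : 0 ≤ ν) (hsum : ∑ x, ν x = 1) (σ : α ≃ α) (s : Set α) :
    2 * mass ν s ≤ 1 + mass ν (s ∩ σ '' s) + ∑ x, |ν (σ x) - ν x| := by
  linarith [mass_add_mass_le hν hsum s (σ '' s), mass_le_mass_image_add ν σ s]

end Mass

section Subspaces

variable {K V : Type*} [Field K] [AddCommGroup V] [Module K V]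

lemma linearIndependent_three_iff {x y z : V} :
    LinearIndependent K ![x, y, z] ↔ x ≠ 0 ∧ y ∉ K ∙ x ∧ z ∉ span K {x, y} := by
  have e3 : ![x, y, z] = Fin.snoc ![x, y] z := by ext i; fin_cases i <;> rfl
  have e2 : ![x, y] = Fin.snoc ![x] y := by ext i; fin_cases i <;> rfl
  rw [e3, linearIndependent_finSnoc, e2, linearIndependent_finSnoc, ← e2]
  simp [Matrix.range_cons, and_assoc, Set.pair_comm y x]

lemma LinearMap.BilinForm.orthogonal_map_of_isometry {B : LinearMap.BilinForm K V}
    {σ : V ≃ₗ[K] V} (hσ : ∀ x y, B (σ x) (σ y) = B x y) (W : Submodule K V) :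
    (B.orthogonal W).map (σ : V →ₗ[K] V) = B.orthogonal (W.map (σ : V →ₗ[K] V)) := by
  ext v
  rw [mem_map_equiv]
  simp only [LinearMap.BilinForm.mem_orthogonal_iff, mem_map, forall_exists_index, and_imp,
    forall_apply_eq_imp_iff₂, LinearEquiv.coe_coe]
  refine forall₂_congr fun w _ => ?_
  rw [← hσ, LinearEquiv.apply_symm_apply]

lemma exists_map_ne_of_finrank_eq_three [FiniteDimensional K V] {ι : Type*}
    (σ : ι → V ≃ₗ[K] V) (hV : finrank K V = 3) {B : LinearMap.BilinForm K V}
    (hB : B.Nondegenerate) (hσB : ∀ i x y, B (σ i x) (σ i y) = B x y)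
    (hline : ∀ v ≠ 0, ∃ i, σ i v ∉ K ∙ v) {W : Submodule K V} (hbot : W ≠ ⊥) (htop : W ≠ ⊤) :
    ∃ i, W.map (σ i : V →ₗ[K] V) ≠ W := by
  have moves_line : ∀ L : Submodule K V, finrank K L = 1 → ∃ i, L.map (σ i : V →ₗ[K] V) ≠ L := by
    intro L hL
    obtain ⟨v, hvL, hv⟩ := L.exists_mem_ne_zero_of_ne_bot (by rintro rfl; simp at hL)
    obtain ⟨i, hi⟩ := hline v hv
    rw [eq_span_singleton_of_mem_of_finrank_eq_one hL hvL hv]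
    refine ⟨i, fun h => hi ?_⟩
    rw [← h]
    exact mem_map_of_mem (mem_span_singleton_self v)
  have h0 : 0 < finrank K W := Nat.pos_of_ne_zero (by rwa [Ne, Submodule.finrank_eq_zero])
  have h3 : finrank K W < 3 := hV ▸ Submodule.finrank_lt htop
  obtain h1 | h2 : finrank K W = 1 ∨ finrank K W = 2 := by omega
  · exact moves_line W h1
  · obtain ⟨i, hi⟩ := moves_line (B.orthogonal W)
      (by rw [LinearMap.BilinForm.finrank_orthogonal hB, hV, h2])
    exact ⟨i, fun h => hi (by rw [LinearMap.BilinForm.orthogonal_map_of_isometry (hσB i), h])⟩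

variable [Fintype V] {ν : V → ℝ}

-- The bound solves `m₀ = 0`, `m_{k+1} = (1 + m_k + 2ε) / 2`, as `W ∩ σW` is a proper subspace of `W`.
theorem mass_le_of_irreducible {ι : Type*} (σ : ι → V ≃ₗ[K] V) (hν : 0 ≤ ν)
    (hsum : ∑ x, ν x = 1) (h0 : ν 0 = 0) {ε : ℝ} (hε : 0 ≤ ε)
    (hσ : ∀ i, ∑ x, |ν (σ i x) - ν x| ≤ 2 * ε)
    (hirr : ∀ W : Submodule K V, W ≠ ⊥ → W ≠ ⊤ → ∃ i, W.map (σ i : V →ₗ[K] V) ≠ W)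
    {k : ℕ} (hk : k < finrank K V) {W : Submodule K V} (hW : finrank K W ≤ k) :
    mass ν W ≤ (1 - 2⁻¹ ^ k) * (1 + 2 * ε) := by
  induction k generalizing W with
  | zero =>
    rw [Submodule.finrank_eq_zero.1 (Nat.le_zero.1 hW), bot_coe, mass_singleton, h0]
    simp
  | succ k ih =>
    by_cases hbot : W = ⊥
    · rw [hbot, bot_coe, mass_singleton, h0]
      have : (2⁻¹ : ℝ) ^ (k + 1) ≤ 1 := pow_le_one₀ (by norm_num) (by norm_num)
      nlinarith
    obtain ⟨i, hi⟩ := hirr W hbot fun h => by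
      rw [h, finrank_top] at hW
      omega
    set U := W ⊓ W.map (σ i : V →ₗ[K] V)
    have hUW : U < W := by
      refine lt_of_le_of_ne inf_le_left fun h => hi ?_
      refine (Submodule.eq_of_le_of_finrank_le (h.ge.trans inf_le_right) ?_).symm
      rw [LinearEquiv.finrank_map_eq]
    have hU := ih (by omega) (W := U) (by have := finrank_lt_finrank_of_lt hUW; omega)
    have hdouble := two_mul_mass_le hν hsum (σ i).toEquiv W
    have hUcoe : (W : Set V) ∩ (σ i).toEquiv '' W = U := by simp [U]
    rw [hUcoe] at hdouble
    simp only [LinearEquiv.coe_toEquiv] at hdouble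
    have key : (1 - (2 : ℝ)⁻¹ ^ (k + 1)) * (1 + 2 * ε) =
        (1 + (1 - 2⁻¹ ^ k) * (1 + 2 * ε) + 2 * ε) / 2 := by ring
    linarith [hσ i]

open scoped Classical in
theorem mul_le_sum_linearIndependent_three (ν : Fin 3 → V → ℝ) (hν : ∀ i, 0 ≤ ν i)
    (hsum : ∀ i, ∑ x, ν i x = 1) (h0 : ν 0 0 = 0) {p q : ℝ} (hq : q ≤ 1)
    (hline : ∀ x : V, mass (ν 1) (K ∙ x : Set V) ≤ p)
    (hplane : ∀ x y : V, mass (ν 2) (span K {x, y} : Set V) ≤ q) :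
    (1 - p) * (1 - q) ≤ ∑ x₁, ∑ x₂, ∑ x₃,
      if LinearIndependent K ![x₁, x₂, x₃] then ν 0 x₁ * ν 1 x₂ * ν 2 x₃ else 0 := by
  have hterm : ∀ x₁ x₂ x₃ : V,
      (if LinearIndependent K ![x₁, x₂, x₃] then ν 0 x₁ * ν 1 x₂ * ν 2 x₃ else 0) =
        ({0}ᶜ : Set V).indicator (ν 0) x₁ * ((K ∙ x₁ : Set V)ᶜ.indicator (ν 1) x₂ *
          (span K {x₁, x₂} : Set V)ᶜ.indicator (ν 2) x₃) := by
    intro x₁ x₂ x₃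
    simp only [linearIndependent_three_iff, indicator_apply, mem_compl_iff, mem_singleton_iff,
      SetLike.mem_coe]
    split_ifs <;> simp_all [mul_assoc]
  have hnonneg : ∀ i (s : Set V) x, 0 ≤ s.indicator (ν i) x :=
    fun i s x => indicator_nonneg (fun x _ => hν i x) x
  calc (1 - p) * (1 - q)
      = ∑ x₁, ({0}ᶜ : Set V).indicator (ν 0) x₁ * ((1 - p) * (1 - q)) := by
        rw [← Finset.sum_mul, ← mass, mass_compl (hsum 0), mass_singleton, h0, sub_zero, one_mul]
    _ ≤ ∑ x₁, ({0}ᶜ : Set V).indicator (ν 0) x₁ * (mass (ν 1) (K ∙ x₁ : Set V)ᶜ * (1 - q)) := by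
        refine Finset.sum_le_sum fun x₁ _ => mul_le_mul_of_nonneg_left ?_ (hnonneg _ _ _)
        rw [mass_compl (hsum 1)]
        exact mul_le_mul_of_nonneg_right (by linarith [hline x₁]) (by linarith)
    _ ≤ ∑ x₁, ({0}ᶜ : Set V).indicator (ν 0) x₁ * ∑ x₂, (K ∙ x₁ : Set V)ᶜ.indicator (ν 1) x₂ *
          mass (ν 2) (span K {x₁, x₂} : Set V)ᶜ := by
        refine Finset.sum_le_sum fun x₁ _ => mul_le_mul_of_nonneg_left ?_ (hnonneg _ _ _)
        rw [mass, Finset.sum_mul]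
        refine Finset.sum_le_sum fun x₂ _ => mul_le_mul_of_nonneg_left ?_ (hnonneg _ _ _)
        rw [mass_compl (hsum 2)]
        linarith [hplane x₁ x₂]
    _ = _ := by simp_rw [mass, Finset.mul_sum, hterm]

end Subspaces

namespace MatrixModScalars

variable {K : Type*} [Field K]

local notation "M₂" => Matrix (Fin 2) (Fin 2) K
local notation "Q" => M₂ ⧸ K ∙ (1 : M₂)

noncomputable def conjAlgEquiv (g : SL(2, K)) : M₂ ≃ₐ[K] M₂ :=
  MulSemiringAction.toAlgEquiv K M₂ (ConjAct.toConjAct (SpecialLinearGroup.toGL g⁻¹))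

lemma conjAlgEquiv_apply (g : SL(2, K)) (x : M₂) :
    conjAlgEquiv g x = ((g⁻¹ : SL(2, K)) : M₂) * x * (g : M₂) := by
  simp [conjAlgEquiv, ConjAct.units_smul_def, Matrix.inv_def]

lemma trace_conjAlgEquiv (g : SL(2, K)) (x : M₂) : trace (conjAlgEquiv g x) = trace x := by
  rw [conjAlgEquiv_apply, trace_mul_cycle]
  simp [mul_adjugate]

noncomputable def conj (g : SL(2, K)) : Q ≃ₗ[K] Q :=
  Quotient.equiv _ _ (conjAlgEquiv g).toLinearEquiv (by simp [map_span])

lemma conj_mk (g : SL(2, K)) (x : M₂) :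
    conj g (Submodule.Quotient.mk x) =
      Submodule.Quotient.mk (((g⁻¹ : SL(2, K)) : M₂) * x * (g : M₂)) := by
  simp [conj, conjAlgEquiv_apply]

lemma mk_eq_zero_iff {x : M₂} :
    (Submodule.Quotient.mk x : Q) = 0 ↔ x 0 1 = 0 ∧ x 1 0 = 0 ∧ x 0 0 = x 1 1 := by
  rw [Quotient.mk_eq_zero, mem_span_singleton]
  constructor
  · rintro ⟨a, rfl⟩
    simp
  · rintro ⟨h01, h10, h⟩
    refine ⟨x 0 0, ?_⟩
    ext i j
    fin_cases i <;> fin_cases j <;> simp [h01, h10, h]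

lemma mk_mem_span_mk_iff {x y : M₂} :
    (Submodule.Quotient.mk y : Q) ∈ K ∙ (Submodule.Quotient.mk x : Q) ↔
      ∃ a b : K, y = a • x + b • 1 := by
  simp only [mem_span_singleton, ← Submodule.Quotient.mk_smul, Submodule.Quotient.eq]
  constructor
  · rintro ⟨a, b, hb⟩
    exact ⟨a, -b, by rw [neg_smul, hb]; abel⟩
  · rintro ⟨a, b, rfl⟩
    exact ⟨a, -b, by simp⟩

lemma finrank_eq_three : finrank K Q = 3 := by
  have h := Submodule.finrank_quotient_add_finrank (K ∙ (1 : M₂))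
  rw [finrank_span_singleton one_ne_zero, Module.finrank_matrix] at h
  simp at h
  omega

noncomputable def traceForm : LinearMap.BilinForm K Q :=
  LinearMap.liftQ₂ (K ∙ 1) (K ∙ 1)
    (2 • (LinearMap.mul K M₂).compr₂ (traceLinearMap (Fin 2) K K) -
      (LinearMap.mul K K).compl₁₂ (traceLinearMap (Fin 2) K K) (traceLinearMap (Fin 2) K K))
    (by
      rw [span_le, singleton_subset_iff, SetLike.mem_coe, LinearMap.mem_ker]
      ext y
      simp [trace_one])
    (by
      rw [span_le, singleton_subset_iff, SetLike.mem_coe, LinearMap.mem_ker]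
      ext y
      simp [trace_one, mul_comm])

lemma traceForm_mk (x y : M₂) :
    traceForm (Submodule.Quotient.mk x : Q) (Submodule.Quotient.mk y) =
      2 * trace (x * y) - trace x * trace y := by
  simp [traceForm, two_smul, two_mul]

lemma traceForm_comm (u v : Q) : traceForm u v = traceForm v u := by
  induction u using Submodule.Quotient.induction_on
  induction v using Submodule.Quotient.induction_on
  rw [traceForm_mk, traceForm_mk, trace_mul_comm, mul_comm (trace _)]

lemma traceForm_conj (g : SL(2, K)) (u v : Q) :
    traceForm (conj g u) (conj g v) = traceForm u v := by
  induction u using Submodule.Quotient.induction_on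
  induction v using Submodule.Quotient.induction_on
  simp only [conj, Quotient.equiv_apply, mapQ_apply, traceForm_mk, LinearEquiv.coe_coe,
    AlgEquiv.toLinearEquiv_apply, ← map_mul, trace_conjAlgEquiv]

lemma traceForm_nondegenerate (h2 : (2 : K) ≠ 0) :
    (traceForm : LinearMap.BilinForm K Q).Nondegenerate := by
  refine (LinearMap.IsRefl.nondegenerate_iff_separatingLeft
    (fun u v h => by rwa [traceForm_comm])).2 fun u hu => ?_
  induction u using Submodule.Quotient.induction_on with | _ x
  have h01 := hu (Submodule.Quotient.mk !![0, 0; 1, 0])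
  have h10 := hu (Submodule.Quotient.mk !![0, 1; 0, 0])
  have h00 := hu (Submodule.Quotient.mk !![1, 0; 0, 0])
  simp [traceForm_mk, trace_fin_two, mul_apply, Fin.sum_univ_two] at h01 h10 h00
  exact mk_eq_zero_iff.2 ⟨h01.resolve_left h2, h10.resolve_left h2, by linear_combination h00⟩

def upperUnipotent : SL(2, K) := ⟨!![1, 1; 0, 1], by simp [det_fin_two_of]⟩

def lowerUnipotent : SL(2, K) := ⟨!![1, 0; 1, 1], by simp [det_fin_two_of]⟩

lemma coe_upperUnipotent_inv : ((upperUnipotent⁻¹ : SL(2, K)) : M₂) = !![1, -1; 0, 1] := by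
  rw [SpecialLinearGroup.SL2_inv_expl]
  ext i j
  fin_cases i <;> fin_cases j <;> simp [upperUnipotent]

lemma coe_lowerUnipotent_inv : ((lowerUnipotent⁻¹ : SL(2, K)) : M₂) = !![1, 0; -1, 1] := by
  rw [SpecialLinearGroup.SL2_inv_expl]
  ext i j
  fin_cases i <;> fin_cases j <;> simp [lowerUnipotent]

lemma eq_of_conj_upperUnipotent_mem (h2 : (2 : K) ≠ 0) {x : M₂}
    (h : conj upperUnipotent (Submodule.Quotient.mk x) ∈ K ∙ (Submodule.Quotient.mk x : Q)) :
    x 1 0 = 0 ∧ x 0 0 = x 1 1 := by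
  obtain ⟨a, b, h⟩ := mk_mem_span_mk_iff.1 (conj_mk upperUnipotent x ▸ h)
  rw [coe_upperUnipotent_inv] at h
  have e00 := congr($h 0 0)
  have e01 := congr($h 0 1)
  have e10 := congr($h 1 0)
  have e11 := congr($h 1 1)
  simp [upperUnipotent, mul_apply, vecMul, dotProduct, Fin.sum_univ_two] at e00 e01 e10 e11
  have hc : x 1 0 = 0 := by
    have : 2 * x 1 0 ^ 2 = 0 := by
      linear_combination (-x 1 0) * e00 + x 1 0 * e11 + (x 0 0 - x 1 1) * e10
    simpa [h2] using this
  rw [hc] at e00 e01 e11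
  refine ⟨hc, sub_eq_zero.1 (pow_eq_zero_iff two_ne_zero |>.1 ?_)⟩
  linear_combination (x 0 0 - x 1 1) * e01 - x 0 1 * (e00 - e11)

lemma eq_of_conj_lowerUnipotent_mem (h2 : (2 : K) ≠ 0) {x : M₂}
    (h : conj lowerUnipotent (Submodule.Quotient.mk x) ∈ K ∙ (Submodule.Quotient.mk x : Q)) :
    x 0 1 = 0 ∧ x 0 0 = x 1 1 := by
  obtain ⟨a, b, h⟩ := mk_mem_span_mk_iff.1 (conj_mk lowerUnipotent x ▸ h)
  rw [coe_lowerUnipotent_inv] at h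
  have e00 := congr($h 0 0)
  have e01 := congr($h 0 1)
  have e10 := congr($h 1 0)
  have e11 := congr($h 1 1)
  simp [lowerUnipotent, mul_apply, vecMul, dotProduct, Fin.sum_univ_two] at e00 e01 e10 e11
  have hb : x 0 1 = 0 := by
    have : 2 * x 0 1 ^ 2 = 0 := by
      linear_combination x 0 1 * e00 - x 0 1 * e11 - (x 0 0 - x 1 1) * e01
    simpa [h2] using this
  rw [hb] at e00 e10 e11
  refine ⟨hb, sub_eq_zero.1 (pow_eq_zero_iff two_ne_zero |>.1 ?_)⟩
  linear_combination x 1 0 * (e00 - e11) - (x 0 0 - x 1 1) * e10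

lemma exists_conj_not_mem_span (h2 : (2 : K) ≠ 0) {v : Q} (hv : v ≠ 0) :
    ∃ g : SL(2, K), conj g v ∉ K ∙ v := by
  induction v using Submodule.Quotient.induction_on with | _ x
  by_contra! hfix
  obtain ⟨h10, hdiag⟩ := eq_of_conj_upperUnipotent_mem h2 (hfix upperUnipotent)
  obtain ⟨h01, -⟩ := eq_of_conj_lowerUnipotent_mem h2 (hfix lowerUnipotent)
  exact hv (mk_eq_zero_iff.2 ⟨h01, h10, hdiag⟩)

lemma exists_conj_map_ne (h2 : (2 : K) ≠ 0) {W : Submodule K Q} (hbot : W ≠ ⊥)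
    (htop : W ≠ ⊤) : ∃ g : SL(2, K), W.map (conj g : Q →ₗ[K] Q) ≠ W :=
  exists_map_ne_of_finrank_eq_three conj finrank_eq_three
    (traceForm_nondegenerate h2) traceForm_conj (fun _ => exists_conj_not_mem_span h2)
    hbot htop

end MatrixModScalars

open scoped Classical in
/-- Let `ℓ > 2` be a prime, `ε ≥ 0`, and let `α₁, α₂, α₃` be
independent random elements of `Q_ℓ`, each supported on nonzero elements and
each having a distribution that is `ε`-close to `SL₂(F_ℓ)`-invariant under
conjugation: for each `g`, the statistical distance (half the ℓ¹-distance)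
between the distribution and its pushforward under the map of `Q_ℓ` induced by
`x ↦ g⁻¹ x g` is at most `ε`.  Then `(α₁, α₂, α₃)` is an `F_ℓ`-basis of `Q_ℓ`
with probability at least `1/8 − 3ε`. -/
theorem stmt_5 (ℓ : ℕ) (hℓ : Nat.Prime ℓ) (hℓ2 : 2 < ℓ)
    (ε : ℝ) (hε : 0 ≤ ε)
    (ν : Fin 3 → QuotF ℓ → ℝ)
    (hpos : ∀ i x, 0 ≤ ν i x)
    (hsum : ∀ i, ∑' x, ν i x = 1)
    (hzero : ∀ i, ν i 0 = 0)
    (hclose : ∀ (i : Fin 3) (g : Matrix.SpecialLinearGroup (Fin 2) (ZMod ℓ))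
      (cg : QuotF ℓ → QuotF ℓ),
      (∀ m : MatF ℓ, cg (Submodule.Quotient.mk m) =
        Submodule.Quotient.mk
          (((g⁻¹ : Matrix.SpecialLinearGroup (Fin 2) (ZMod ℓ)) : MatF ℓ) * m * (g : MatF ℓ))) →
      (1 / 2 : ℝ) * ∑' x, |ν i (cg x) - ν i x| ≤ ε) :
    (1 : ℝ) / 8 - 3 * ε ≤ ∑' x₁, ∑' x₂, ∑' x₃,
      (if LinearIndependent (ZMod ℓ) ![x₁, x₂, x₃] then ν 0 x₁ * ν 1 x₂ * ν 2 x₃ else 0) := by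
  have : Fact ℓ.Prime := ⟨hℓ⟩
  have h2 : (2 : ZMod ℓ) ≠ 0 := by
    exact_mod_cast (ZMod.natCast_eq_zero_iff 2 ℓ).not.2 (Nat.not_dvd_of_pos_of_lt two_pos hℓ2)
  have hsum' : ∀ i, ∑ x, ν i x = 1 := fun i => (tsum_fintype _).symm.trans (hsum i)
  have hσ : ∀ i g, ∑ x, |ν i (MatrixModScalars.conj g x) - ν i x| ≤ 2 * ε := fun i g => by
    have h := hclose i g (MatrixModScalars.conj g) (MatrixModScalars.conj_mk g)
    rwa [tsum_fintype, one_div, inv_mul_le_iff₀ two_pos] at h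
  have hmass : ∀ i k, k < 3 → ∀ W : Submodule (ZMod ℓ) (QuotF ℓ), finrank (ZMod ℓ) W ≤ k →
      mass (ν i) W ≤ (1 - 2⁻¹ ^ k) * (1 + 2 * ε) := fun i k hk W hW =>
    mass_le_of_irreducible MatrixModScalars.conj (hpos i) (hsum' i) (hzero i) hε (hσ i)
      (fun _ => MatrixModScalars.exists_conj_map_ne h2)
      (hk.trans_eq MatrixModScalars.finrank_eq_three.symm) hW
  simp only [tsum_fintype]
  rcases le_or_gt ε (1 / 6) with hε6 | hε6
  · refine le_trans ?_ (mul_le_sum_linearIndependent_three ν hpos hsum' (hzero 0) ?_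
      (fun x => hmass 1 1 (by norm_num) _ ?_) (fun x y => hmass 2 2 (by norm_num) _ ?_))
    · norm_num
      nlinarith
    · norm_num
      linarith
    · simpa using finrank_span_le_card ({x} : Set (QuotF ℓ))
    · exact (finrank_span_le_card ({x, y} : Set (QuotF ℓ))).trans
        (by simpa using Finset.card_le_two)
  · refine le_trans (by linarith) (Finset.sum_nonneg fun x₁ _ => Finset.sum_nonneg fun x₂ _ =>
      Finset.sum_nonneg fun x₃ _ => ite_nonneg ?_ le_rfl)
    exact mul_nonneg (mul_nonneg (hpos 0 x₁) (hpos 1 x₂)) (hpos 2 x₃)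
end

section
/- Let B be a quaternion algebra over ℚ and O an order in B. Let N ≥ 2 be an integer, and let ν be a probability distribution on O, with finite support, supported on N-reduced elements. Then there exist a prime number ℓ and an integer a ≥ 0 such that ℓ^{a+1} divides N and the probability, for α distributed according to ν, that α ∈ ℤ·1 + ℓ^a·O and α ∉ ℤ·1 + ℓ^{a+1}·O is at least 1/log₂(N). -/
/-!
If `α ∉ ℤ + N·O`, then by the Chinese remainder theorem `α ∉ ℤ + ℓ^e·O` for some exact prime
power `ℓ^e ∥ N`, so some `a < e` has `α ∈ ℤ + ℓ^a·O` but `α ∉ ℤ + ℓ^(a+1)·O`. The pairs `(ℓ, a)`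
with `ℓ^(a+1) ∣ N` number `Ω(N) ≤ log₂ N`, and they cover the support of `ν`, so one of them
carries mass at least `1 / log₂ N`.
-/

open scoped Quaternion
open Finset

theorem Nat.exists_lt_and_not_succ {P : ℕ → Prop} (h0 : P 0) {e : ℕ} (he : ¬P e) :
    ∃ a < e, P a ∧ ¬P (a + 1) := by
  induction e with
  | zero => exact absurd h0 he
  | succ e ih =>
    by_cases hPe : P e
    · exact ⟨e, e.lt_succ_self, hPe, he⟩
    · obtain ⟨a, hae, hPa, hPa'⟩ := ih hPe
      exact ⟨a, hae.trans e.lt_succ_self, hPa, hPa'⟩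

def IntCongr {R : Type*} [Ring R] (m : ℕ) (x : R) : Prop :=
  ∃ (n : ℤ) (y : R), x = n • (1 : R) + m • y

namespace IntCongr

variable {R : Type*} [Ring R] {x : R}

theorem one (x : R) : IntCongr 1 x := ⟨0, x, by simp⟩

theorem mul_of_coprime {m n : ℕ} (hmn : m.Coprime n) (hm : IntCongr m x) (hn : IntCongr n x) :
    IntCongr (m * n) x := by
  obtain ⟨a, y, hy⟩ := hm
  obtain ⟨b, z, hz⟩ := hn
  obtain ⟨u, v, huv⟩ := Nat.isCoprime_iff_coprime.mpr hmn
  refine ⟨u * m * b + v * n * a, u • z + v • y, ?_⟩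
  simp only [← natCast_zsmul] at hy hz ⊢
  -- `x = u m x + v n x`, where `m x` is expanded by `hz` and `n x` by `hy`
  linear_combination (norm := module) (u * m : ℤ) • hz + (v * n : ℤ) • hy - huv • x

theorem prod_of_pairwise_coprime {ι : Type*} {s : Finset ι} {f : ι → ℕ}
    (hs : (s : Set ι).Pairwise fun i j => (f i).Coprime (f j)) (hf : ∀ i ∈ s, IntCongr (f i) x) :
    IntCongr (∏ i ∈ s, f i) x := by
  classical
  induction s using Finset.induction_on with
  | empty => simpa using one x
  | insert i s hi ih =>
    rw [prod_insert hi]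
    refine mul_of_coprime (Nat.Coprime.prod_right fun j hj => ?_) (hf i (mem_insert_self i s))
      (ih (hs.mono (by simp)) fun j hj => hf j (mem_insert_of_mem hj))
    exact hs (by simp) (by simp [hj]) (ne_of_mem_of_not_mem hj hi).symm

theorem of_forall_primeFactors {N : ℕ} (hN : N ≠ 0)
    (h : ∀ p ∈ N.primeFactors, IntCongr (p ^ N.factorization p) x) : IntCongr N x := by
  rw [Nat.prod_primeFactors_pow_factorization hN]
  refine prod_of_pairwise_coprime (fun p hp q hq hpq => ?_) h
  exact Nat.coprime_pow_primes _ _ (Nat.prime_of_mem_primeFactors hp)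
    (Nat.prime_of_mem_primeFactors hq) hpq

theorem exists_prime_pow_step {N : ℕ} (hN : N ≠ 0) (hx : ¬IntCongr N x) :
    ∃ ℓ a : ℕ, ℓ.Prime ∧ ℓ ^ (a + 1) ∣ N ∧ IntCongr (ℓ ^ a) x ∧ ¬IntCongr (ℓ ^ (a + 1)) x := by
  obtain ⟨ℓ, hℓN, hℓx⟩ : ∃ ℓ ∈ N.primeFactors, ¬IntCongr (ℓ ^ N.factorization ℓ) x := by
    by_contra! h
    exact hx (of_forall_primeFactors hN h)
  have hℓ := Nat.prime_of_mem_primeFactors hℓN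
  obtain ⟨a, ha, hax, hax'⟩ :=
    Nat.exists_lt_and_not_succ (P := fun k => IntCongr (ℓ ^ k) x) (by simpa using one x) hℓx
  exact ⟨ℓ, a, hℓ, (hℓ.pow_dvd_iff_le_factorization hN).mpr ha, hax, hax'⟩

end IntCongr

def Nat.primePowerSteps (N : ℕ) : Finset (Σ _ : ℕ, ℕ) :=
  N.primeFactors.sigma fun p => range (N.factorization p)

theorem Nat.mem_primePowerSteps {N : ℕ} (hN : N ≠ 0) {ℓ a : ℕ} :
    ⟨ℓ, a⟩ ∈ N.primePowerSteps ↔ ℓ.Prime ∧ ℓ ^ (a + 1) ∣ N := by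
  simp only [primePowerSteps, mem_sigma, mem_range, mem_primeFactors, and_iff_left hN]
  constructor
  · rintro ⟨⟨hℓ, -⟩, ha⟩
    exact ⟨hℓ, (hℓ.pow_dvd_iff_le_factorization hN).mpr ha⟩
  · rintro ⟨hℓ, hdvd⟩
    exact ⟨⟨hℓ, (dvd_pow_self ℓ a.succ_ne_zero).trans hdvd⟩,
      (hℓ.pow_dvd_iff_le_factorization hN).mp hdvd⟩

theorem Nat.two_pow_card_primePowerSteps_le {N : ℕ} (hN : N ≠ 0) :
    2 ^ #N.primePowerSteps ≤ N := by
  calc 2 ^ #N.primePowerSteps = ∏ p ∈ N.primeFactors, 2 ^ N.factorization p := by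
        simp [primePowerSteps, prod_pow_eq_pow_sum]
    _ ≤ ∏ p ∈ N.primeFactors, p ^ N.factorization p :=
        prod_le_prod' fun p hp => Nat.pow_le_pow_left (prime_of_mem_primeFactors hp).two_le _
    _ = N := (prod_primeFactors_pow_factorization hN).symm

theorem Nat.card_primePowerSteps_le_logb {N : ℕ} (hN : N ≠ 0) :
    (#N.primePowerSteps : ℝ) ≤ Real.logb 2 N := by
  rw [Real.le_logb_iff_rpow_le one_lt_two (by positivity), Real.rpow_natCast]
  exact_mod_cast two_pow_card_primePowerSteps_le hN

theorem exists_le_finsum_mem_of_cover {α ι : Type*} {ν : α → ℝ}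
    (hfin : (Function.support ν).Finite) (hpos : ∀ x, 0 ≤ ν x) (hsum : ∑ᶠ x, ν x = 1) {T : Finset ι} {S : ι → Set α}
    (hcover : ∀ x, ν x ≠ 0 → ∃ t ∈ T, x ∈ S t) :
    ∃ t ∈ T, 1 / (#T : ℝ) ≤ ∑ᶠ x ∈ S t, ν x := by
  set F := hfin.toFinset
  have hmass : ∀ s : Set α, ∑ᶠ x ∈ s, ν x = ∑ x ∈ F, s.indicator ν x := fun s => by
    rw [finsum_mem_def]
    refine finsum_eq_sum_of_support_subset _ fun x hx => hfin.mem_toFinset.mpr ?_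
    exact fun h => hx (by simp [h])
  have hF : ∑ x ∈ F, ν x = 1 := by rwa [← finsum_eq_sum ν hfin]
  have hT : T.Nonempty := by
    obtain ⟨x, hx⟩ := nonempty_of_sum_ne_zero (hF.trans_ne one_ne_zero)
    obtain ⟨t, ht, -⟩ := hcover x (hfin.mem_toFinset.mp hx)
    exact ⟨t, ht⟩
  refine exists_le_of_sum_le hT ?_
  calc ∑ _ ∈ T, 1 / (#T : ℝ) = ∑ x ∈ F, ν x := by
        rw [sum_const, nsmul_eq_mul, mul_one_div_cancel (by exact_mod_cast hT.card_pos.ne'), hF]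
    _ ≤ ∑ x ∈ F, ∑ t ∈ T, (S t).indicator ν x := by
        refine sum_le_sum fun x hx => ?_
        obtain ⟨t, ht, hxt⟩ := hcover x (hfin.mem_toFinset.mp hx)
        rw [← Set.indicator_of_mem hxt ν]
        exact single_le_sum (f := fun t => (S t).indicator ν x)
          (fun t _ => Set.indicator_nonneg (fun y _ => hpos y) x) ht
    _ = ∑ t ∈ T, ∑ᶠ x ∈ S t, ν x := by
        rw [sum_comm]; simp only [hmass]

theorem stmt_8_general (c₁ c₂ : ℚ)
    (O : Subring ℍ[ℚ, c₁, c₂])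
    (N : ℕ) (hN : 2 ≤ N)
    (ν : ↥O → ℝ)
    (hfin : (Function.support ν).Finite)
    (hpos : ∀ x, 0 ≤ ν x)
    (hsum : ∑ᶠ x, ν x = 1)
    (hred : ∀ x : ↥O, ν x ≠ 0 → ¬∃ (n : ℤ) (y : ↥O), x = n • (1 : ↥O) + N • y) :
    ∃ (ℓ a : ℕ), Nat.Prime ℓ ∧ ℓ ^ (a + 1) ∣ N ∧
      1 / Real.logb 2 N ≤
        ∑ᶠ x ∈ {x : ↥O | (∃ (n : ℤ) (y : ↥O), x = n • (1 : ↥O) + ℓ ^ a • y) ∧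
          ¬∃ (n : ℤ) (y : ↥O), x = n • (1 : ↥O) + ℓ ^ (a + 1) • y}, ν x := by
  have hN0 : N ≠ 0 := by omega
  obtain ⟨⟨ℓ, a⟩, hT, hmass⟩ := exists_le_finsum_mem_of_cover hfin hpos hsum
    (T := N.primePowerSteps)
    (S := fun t => {x | IntCongr (t.1 ^ t.2) x ∧ ¬IntCongr (t.1 ^ (t.2 + 1)) x})
    fun x hx => by
      obtain ⟨ℓ, a, hℓ, hdvd, hstep⟩ := IntCongr.exists_prime_pow_step hN0 (hred x hx)
      exact ⟨⟨ℓ, a⟩, (Nat.mem_primePowerSteps hN0).mpr ⟨hℓ, hdvd⟩, hstep⟩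
  have hcard : (0 : ℝ) < #N.primePowerSteps := by exact_mod_cast card_pos.mpr ⟨_, hT⟩
  obtain ⟨hℓ, hdvd⟩ := (Nat.mem_primePowerSteps hN0).mp hT
  exact ⟨ℓ, a, hℓ, hdvd,
    (one_div_le_one_div_of_le hcard (Nat.card_primePowerSteps_le_logb hN0)).trans hmass⟩

/-- Let `B = ℍ[ℚ, c₁, c₂]` be a quaternion algebra over `ℚ`
and `O` an order in `B` (a subring that is finitely generated as a `ℤ`-module
and spans `B` over `ℚ`).  Let `N ≥ 2` and let `ν` be a finitely supported
probability distribution on `O` supported on `N`-reduced elements.  Then there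
are a prime `ℓ` and an integer `a ≥ 0` with `ℓ^{a+1} ∣ N` such that the
probability that `α ∈ ℤ·1 + ℓ^a·O` and `α ∉ ℤ·1 + ℓ^{a+1}·O` is at least
`1/log₂ N`. -/
theorem stmt_8 (c₁ c₂ : ℚ) (hc₁ : c₁ ≠ 0) (hc₂ : c₂ ≠ 0)
    (O : Subring ℍ[ℚ, c₁, c₂])
    (hfg : Module.Finite ℤ ↥O)
    (hspan : Submodule.span ℚ (O : Set ℍ[ℚ, c₁, c₂]) = ⊤)
    (N : ℕ) (hN : 2 ≤ N)
    (ν : ↥O → ℝ)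
    (hfin : (Function.support ν).Finite)
    (hpos : ∀ x, 0 ≤ ν x)
    (hsum : ∑ᶠ x, ν x = 1)
    (hred : ∀ x : ↥O, ν x ≠ 0 → ¬∃ (n : ℤ) (y : ↥O), x = n • (1 : ↥O) + N • y) :
    ∃ (ℓ a : ℕ), Nat.Prime ℓ ∧ ℓ ^ (a + 1) ∣ N ∧
      1 / Real.logb 2 N ≤
        ∑ᶠ x ∈ {x : ↥O | (∃ (n : ℤ) (y : ↥O), x = n • (1 : ↥O) + ℓ ^ a • y) ∧
          ¬∃ (n : ℤ) (y : ↥O), x = n • (1 : ↥O) + ℓ ^ (a + 1) • y}, ν x :=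
  stmt_8_general c₁ c₂ O N hN ν hfin hpos hsum hred
end
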